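/- arXiv:2110.02820 — 2 statements merged into one kernel-verified Lean document; each statement's English description precedes it below -/
import Mathlib

section
/- Let A be an n×n real symmetric positive semidefinite matrix with eigenvalues λ₁ ≥ ⋯ ≥ λ_n, eigenvectors v₁,…,v_n, and let μ ≥ 0 with λ_n + μ > 0. Fix 1 ≤ ℓ < n, let V_ℓ = [v₁ … v_ℓ], and consider the class 𝒫 of preconditioners P = V_ℓ M V_ℓᵀ + β(I − V_ℓ V_ℓᵀ) where β > 0 and M is an ℓ×ℓ symmetric positive definite matrix. Then for every P ∈ 𝒫, the condition number satisfies κ₂(P^{-1/2}(A + μI)P^{-1/2}) ≥ (λ_{ℓ+1} + μ)/(λ_n + μ). -/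
open Matrix MeasureTheory ProbabilityTheory
open scoped Classical

/-- Moore–Penrose pseudoinverse (characterized by the four Penrose conditions). -/
noncomputable def pinv {m n : ℕ} (A : Matrix (Fin m) (Fin n) ℝ) : Matrix (Fin n) (Fin m) ℝ :=
  if h : ∃ B : Matrix (Fin n) (Fin m) ℝ,
      A * B * A = A ∧ B * A * B = B ∧ (A * B)ᵀ = A * B ∧ (B * A)ᵀ = B * A
  then h.choose else 0

/-- Nyström approximation of `A` with respect to the test matrix `X`. -/
noncomputable def nystrom {n l : ℕ} (A : Matrix (Fin n) (Fin n) ℝ)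
    (X : Matrix (Fin n) (Fin l) ℝ) : Matrix (Fin n) (Fin n) ℝ :=
  A * X * pinv (Xᵀ * A * X) * (A * X)ᵀ

/-- Spectral (ℓ² operator) norm of a matrix. -/
noncomputable def specNorm {m n : ℕ} (M : Matrix (Fin m) (Fin n) ℝ) : ℝ :=
  ‖LinearMap.toContinuousLinearMap (Matrix.toEuclideanLin M)‖

/-- Frobenius norm of a matrix. -/
noncomputable def frobNorm {m n : ℕ} (M : Matrix (Fin m) (Fin n) ℝ) : ℝ :=
  Real.sqrt (∑ i, ∑ j, (M i j) ^ 2)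

/-- Euclidean norm of a vector. -/
noncomputable def euclNorm {n : ℕ} (x : Fin n → ℝ) : ℝ :=
  Real.sqrt (∑ i, (x i) ^ 2)

/-- Law of an `n × l` random matrix with independent standard normal entries. -/
noncomputable def gaussianEnsemble (n l : ℕ) : Measure (Fin n → Fin l → ℝ) :=
  Measure.pi fun _ => Measure.pi fun _ => gaussianReal 0 1

/-- The psd square root of a psd matrix (junk value `0` otherwise). -/
noncomputable def matSqrt {n : ℕ} (M : Matrix (Fin n) (Fin n) ℝ) : Matrix (Fin n) (Fin n) ℝ :=
  if hM : M.PosSemidef then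
    (hM.1.eigenvectorUnitary : Matrix (Fin n) (Fin n) ℝ) *
      Matrix.diagonal (Real.sqrt ∘ hM.1.eigenvalues) *
      (star hM.1.eigenvectorUnitary : Matrix (Fin n) (Fin n) ℝ) else 0

/-- ℓ² condition number of a symmetric matrix: ratio of the largest to the smallest
eigenvalue (junk value `0` for non-symmetric matrices). -/
noncomputable def kappa {n : ℕ} (M : Matrix (Fin n) (Fin n) ℝ) : ℝ :=
  if hM : M.IsHermitian then (⨆ i, hM.eigenvalues i) / (⨅ i, hM.eigenvalues i) else 0

/-! For `j ≥ ℓ` the column `v_j` of `V` is orthogonal to the range of `V_ℓ`, so it is an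
eigenvector of `P` with eigenvalue `β` as well as of `A + μI` with eigenvalue `λ_j + μ`; hence
`(λ_j + μ)/β` is an eigenvalue of `P⁻¹(A + μI)`. Conjugation by `P^{1/2}` turns `P⁻¹(A + μI)` into
`P^{-1/2}(A + μI)P^{-1/2}`, which therefore has the same spectrum and is positive definite. Its
largest eigenvalue is thus at least `(λ_{ℓ+1} + μ)/β` and its smallest one lies in
`(0, (λ_n + μ)/β]`. -/

lemma Matrix.mem_spectrum_of_mulVec_eq_smul {m : Type*} [Fintype m] [DecidableEq m]
    {X : Matrix m m ℝ} {c : ℝ} {w : m → ℝ} (hw : w ≠ 0) (h : X *ᵥ w = c • w) :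
    c ∈ spectrum ℝ X := by
  rw [← spectrum_toLin', ← Module.End.hasEigenvalue_iff_mem_spectrum]
  exact Module.End.hasEigenvalue_of_hasEigenvector
    ⟨Module.End.mem_eigenspace_iff.mpr (by rwa [toLin'_apply]), hw⟩

lemma Matrix.inv_mulVec_eq_inv_smul {m : Type*} [Fintype m] [DecidableEq m]
    {X : Matrix m m ℝ} (hX : IsUnit X.det) {c : ℝ} {w : m → ℝ} (h : X *ᵥ w = c • w) :
    X⁻¹ *ᵥ w = c⁻¹ • w := by
  have h1 : c • (X⁻¹ *ᵥ w) = w := by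
    rw [← mulVec_smul, ← h, mulVec_mulVec, nonsing_inv_mul _ hX, one_mulVec]
  rcases eq_or_ne c 0 with rfl | hc
  · rw [zero_smul] at h1
    simp [← h1]
  · exact (eq_inv_smul_iff₀ hc).mpr h1

section orthogonal

variable {m k : Type*} [Fintype m] [DecidableEq m] {V : Matrix m m ℝ}

lemma Matrix.transpose_mulVec_col (hV : Vᵀ * V = 1) (j : m) : Vᵀ *ᵥ V.col j = Pi.single j 1 := by
  rw [← mulVec_single_one, mulVec_mulVec, hV, one_mulVec]

lemma Matrix.col_ne_zero (hV : Vᵀ * V = 1) (j : m) : V.col j ≠ 0 := fun h => by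
  simpa [h] using congrFun (transpose_mulVec_col hV j) j

lemma Matrix.mul_diagonal_mul_transpose_mulVec_col (hV : Vᵀ * V = 1) (d : m → ℝ) (j : m) :
    (V * diagonal d * Vᵀ) *ᵥ V.col j = d j • V.col j := by
  rw [← mulVec_mulVec, transpose_mulVec_col hV, ← mulVec_mulVec, diagonal_mulVec_single,
    ← smul_eq_mul, Pi.single_smul', mulVec_smul, mulVec_single_one]

lemma Matrix.mul_diagonal_mul_transpose_add_smul_one (hV : Vᵀ * V = 1) (d : m → ℝ) (μ : ℝ) :
    V * diagonal d * Vᵀ + μ • 1 = V * diagonal (fun i => d i + μ) * Vᵀ := by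
  rw [← diagonal_add, ← smul_one_eq_diagonal, Matrix.mul_add, Matrix.add_mul, Matrix.mul_smul,
    Matrix.smul_mul, Matrix.mul_one, mul_eq_one_comm.mp hV]

lemma Matrix.posDef_mul_diagonal_mul_transpose (hV : Vᵀ * V = 1) {d : m → ℝ}
    (hd : ∀ i, 0 < d i) : (V * diagonal d * Vᵀ).PosDef := by
  have hinj : Function.Injective V.vecMul := Function.LeftInverse.injective (g := (· ᵥ* Vᵀ))
    fun x => by dsimp only; rw [vecMul_vecMul, mul_eq_one_comm.mp hV, vecMul_one]
  simpa using (posDef_diagonal_iff.mpr hd).mul_mul_conjTranspose_same hinj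

lemma Matrix.transpose_submatrix_mulVec_col (hV : Vᵀ * V = 1) {f : k → m} {j : m}
    (hj : j ∉ Set.range f) : (V.submatrix id f)ᵀ *ᵥ V.col j = 0 := by
  funext i
  exact (congrFun (transpose_mulVec_col hV j) (f i)).trans
    (Pi.single_eq_of_ne (fun h => hj ⟨i, h⟩) 1)

lemma Matrix.transpose_submatrix_mul_submatrix [DecidableEq k] (hV : Vᵀ * V = 1) {f : k → m}
    (hf : Function.Injective f) : (V.submatrix id f)ᵀ * V.submatrix id f = 1 := by
  rw [transpose_submatrix, ← submatrix_mul _ _ _ _ _ Function.bijective_id, hV, submatrix_one f hf]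

end orthogonal

section preconditioner

variable {m k : Type*} [Fintype m] [Fintype k] [DecidableEq m] {U : Matrix m k ℝ}

def preconditioner (U : Matrix m k ℝ) (M : Matrix k k ℝ) (β : ℝ) : Matrix m m ℝ :=
  U * M * Uᵀ + β • (1 - U * Uᵀ)

lemma preconditioner_mulVec_of_transpose_mulVec_eq_zero (M : Matrix k k ℝ) (β : ℝ) {x : m → ℝ}
    (hx : Uᵀ *ᵥ x = 0) : preconditioner U M β *ᵥ x = β • x := by
  rw [preconditioner, add_mulVec, ← mulVec_mulVec, hx, mulVec_zero, zero_add, smul_mulVec,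
    sub_mulVec, one_mulVec, ← mulVec_mulVec, hx, mulVec_zero, sub_zero]

lemma posSemidef_one_sub_mul_transpose [DecidableEq k] (hU : Uᵀ * U = 1) :
    (1 - U * Uᵀ).PosSemidef := by
  have hH : (1 - U * Uᵀ)ᴴ = 1 - U * Uᵀ := by
    simp [conjTranspose_eq_transpose_of_trivial, transpose_sub]
  have hidem : (1 - U * Uᵀ) * (1 - U * Uᵀ) = 1 - U * Uᵀ := by
    simp only [Matrix.sub_mul, Matrix.mul_sub, Matrix.one_mul, Matrix.mul_one, Matrix.mul_assoc,
      ← Matrix.mul_assoc Uᵀ, hU]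
    abel
  have h := posSemidef_conjTranspose_mul_self (1 - U * Uᵀ)
  rwa [hH, hidem] at h

lemma preconditioner_posDef [DecidableEq k] (hU : Uᵀ * U = 1) {M : Matrix k k ℝ}
    (hM : M.PosDef) {β : ℝ} (hβ : 0 < β) : (preconditioner U M β).PosDef := by
  have hUMU : (U * M * Uᵀ).PosSemidef := by
    simpa using hM.posSemidef.mul_mul_conjTranspose_same U
  have hQ := posSemidef_one_sub_mul_transpose hU
  refine PosDef.of_dotProduct_mulVec_pos (hUMU.isHermitian.add (hQ.smul hβ.le).isHermitian)
    fun x hx => ?_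
  rw [preconditioner, add_mulVec, dotProduct_add, smul_mulVec, dotProduct_smul, smul_eq_mul]
  have hQx := mul_nonneg hβ.le (hQ.dotProduct_mulVec_nonneg x)
  by_cases hUx : Uᵀ *ᵥ x = 0
  · have hxQx : star x ⬝ᵥ (1 - U * Uᵀ) *ᵥ x = star x ⬝ᵥ x := by
      rw [sub_mulVec, one_mulVec, ← mulVec_mulVec, hUx, mulVec_zero, sub_zero]
    rw [hxQx]
    nlinarith [hUMU.dotProduct_mulVec_nonneg x, dotProduct_star_self_pos_iff.mpr hx]
  · have hxUMUx : star x ⬝ᵥ (U * M * Uᵀ) *ᵥ x = star (Uᵀ *ᵥ x) ⬝ᵥ M *ᵥ (Uᵀ *ᵥ x) := by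
      rw [← mulVec_mulVec, ← mulVec_mulVec, dotProduct_mulVec, ← mulVec_transpose]
      simp
    linarith [hxUMUx ▸ hM.dotProduct_mulVec_pos hUx]

end preconditioner

section matSqrt

variable {n : ℕ} {P : Matrix (Fin n) (Fin n) ℝ}

lemma matSqrt_eq_cfc (hP : P.PosSemidef) : matSqrt P = cfc Real.sqrt P := by
  rw [matSqrt, dif_pos hP, hP.1.cfc_eq, IsHermitian.cfc, Unitary.conjStarAlgAut_apply]
  rfl

lemma isHermitian_matSqrt (hP : P.PosSemidef) : (matSqrt P).IsHermitian := by
  rw [matSqrt_eq_cfc hP]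
  exact cfc_predicate Real.sqrt P

lemma matSqrt_mul_self (hP : P.PosSemidef) : matSqrt P * matSqrt P = P := by
  have hsq : Set.EqOn (fun x => Real.sqrt x * Real.sqrt x) id (spectrum ℝ P) := by
    rw [hP.1.spectrum_real_eq_range_eigenvalues]
    rintro _ ⟨i, rfl⟩
    exact Real.mul_self_sqrt (hP.eigenvalues_nonneg i)
  rw [matSqrt_eq_cfc hP, ← cfc_mul Real.sqrt Real.sqrt P, cfc_congr hsq]
  exact cfc_id ℝ P hP.1

lemma isUnit_det_matSqrt (hP : P.PosDef) : IsUnit (matSqrt P).det := by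
  have h : IsUnit ((matSqrt P).det * (matSqrt P).det) := by
    rw [← det_mul, matSqrt_mul_self hP.posSemidef, ← isUnit_iff_isUnit_det]
    exact hP.isUnit
  exact isUnit_of_mul_isUnit_left h

lemma spectrum_inv_matSqrt_mul_mul_inv_matSqrt (hP : P.PosDef) (C : Matrix (Fin n) (Fin n) ℝ) :
    spectrum ℝ ((matSqrt P)⁻¹ * C * (matSqrt P)⁻¹) = spectrum ℝ (P⁻¹ * C) := by
  have hS := isUnit_det_matSqrt hP
  have hconj : (matSqrt P)⁻¹ * ((matSqrt P)⁻¹ * C * (matSqrt P)⁻¹) * matSqrt P = P⁻¹ * C := by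
    conv_rhs => rw [← matSqrt_mul_self hP.posSemidef, Matrix.mul_inv_rev]
    simp only [Matrix.mul_assoc, nonsing_inv_mul _ hS, Matrix.mul_one]
  rw [← hconj, ← spectrum.units_conjugate' (u := ((isUnit_iff_isUnit_det _).mpr hS).unit),
    coe_units_inv, IsUnit.unit_spec]

lemma posDef_inv_matSqrt_mul_mul_inv_matSqrt (hP : P.PosDef) {C : Matrix (Fin n) (Fin n) ℝ}
    (hC : C.PosDef) : ((matSqrt P)⁻¹ * C * (matSqrt P)⁻¹).PosDef := by
  have hH : ((matSqrt P)⁻¹)ᴴ = (matSqrt P)⁻¹ := (isHermitian_matSqrt hP.posSemidef).inv.eq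
  have hinj : Function.Injective ((matSqrt P)⁻¹).mulVec :=
    mulVec_injective_iff_isUnit.mpr ((isUnit_iff_isUnit_det _).mpr
      (isUnit_nonsing_inv_det _ (isUnit_det_matSqrt hP)))
  simpa only [hH] using hC.conjTranspose_mul_mul_same hinj

end matSqrt

lemma div_le_kappa_of_mem_spectrum {n : ℕ} {B : Matrix (Fin n) (Fin n) ℝ} (hB : B.PosDef)
    {a b : ℝ} (ha : a ∈ spectrum ℝ B) (hb : b ∈ spectrum ℝ B) : a / b ≤ kappa B := by
  rw [hB.1.spectrum_real_eq_range_eigenvalues] at ha hb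
  obtain ⟨i, rfl⟩ := ha
  obtain ⟨j, rfl⟩ := hb
  have : Nonempty (Fin n) := ⟨i⟩
  have hbdd : BddAbove (Set.range hB.1.eigenvalues) := (Set.finite_range _).bddAbove
  obtain ⟨k, hk⟩ := exists_eq_ciInf_of_finite (f := hB.1.eigenvalues)
  rw [kappa, dif_pos hB.1, ← hk]
  exact div_le_div₀ ((hB.eigenvalues_pos i).le.trans (le_ciSup hbdd i)) (le_ciSup hbdd i)
    (hB.eigenvalues_pos k) (hk ▸ ciInf_le (Set.finite_range _).bddBelow j)

/-- Eigenvalues are 0-indexed: `λ_{ℓ+1} = lam ⟨l, _⟩` and `λ_n = lam ⟨n - 1, _⟩`. -/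
theorem optimal_preconditioner_lower_bound {n : ℕ}
    (A : Matrix (Fin n) (Fin n) ℝ)
    (lam : Fin n → ℝ) (hanti : Antitone lam)
    (V : Matrix (Fin n) (Fin n) ℝ) (hV : Vᵀ * V = 1)
    (hdecomp : A = V * Matrix.diagonal lam * Vᵀ)
    (μ : ℝ)
    (l : ℕ) (hln : l < n)
    (hpos : 0 < lam ⟨n - 1, by omega⟩ + μ)
    (β : ℝ) (hβ : 0 < β)
    (M : Matrix (Fin l) (Fin l) ℝ) (hM : M.PosDef)
    (P : Matrix (Fin n) (Fin n) ℝ)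
    (hP : P = V.submatrix id (Fin.castLE hln.le) * M * (V.submatrix id (Fin.castLE hln.le))ᵀ
        + β • ((1 : Matrix (Fin n) (Fin n) ℝ)
          - V.submatrix id (Fin.castLE hln.le) * (V.submatrix id (Fin.castLE hln.le))ᵀ)) :
    (lam ⟨l, hln⟩ + μ) / (lam ⟨n - 1, by omega⟩ + μ)
      ≤ kappa ((matSqrt P)⁻¹ * (A + μ • (1 : Matrix (Fin n) (Fin n) ℝ)) * (matSqrt P)⁻¹) := by
  have hPpd : P.PosDef := hP ▸ preconditioner_posDef
    (transpose_submatrix_mul_submatrix hV (Fin.castLE_injective _)) hM hβ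
  subst hdecomp
  rw [mul_diagonal_mul_transpose_add_smul_one hV]
  have hlam_pos (i : Fin n) : 0 < lam i + μ :=
    hpos.trans_le (by gcongr; exact hanti (Fin.le_def.mpr (show (i : ℕ) ≤ n - 1 by omega)))
  have hmem (j : Fin n) (hj : l ≤ j) : (lam j + μ) / β ∈ spectrum ℝ
      ((matSqrt P)⁻¹ * (V * diagonal (fun i => lam i + μ) * Vᵀ) * (matSqrt P)⁻¹) := by
    have hj' : j ∉ Set.range (Fin.castLE hln.le) := by
      rintro ⟨i, rfl⟩
      exact absurd i.2 (not_lt.mpr hj)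
    have hPj : P *ᵥ V.col j = β • V.col j := by
      rw [hP]
      exact preconditioner_mulVec_of_transpose_mulVec_eq_zero M β
        (transpose_submatrix_mulVec_col hV hj')
    rw [spectrum_inv_matSqrt_mul_mul_inv_matSqrt hPpd]
    refine mem_spectrum_of_mulVec_eq_smul (col_ne_zero hV j) ?_
    rw [← mulVec_mulVec, mul_diagonal_mul_transpose_mulVec_col hV, mulVec_smul,
      inv_mulVec_eq_inv_smul ((isUnit_iff_isUnit_det P).mp hPpd.isUnit) hPj, smul_smul,
      div_eq_mul_inv]
  calc (lam ⟨l, hln⟩ + μ) / (lam ⟨n - 1, by omega⟩ + μ)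
      = ((lam ⟨l, hln⟩ + μ) / β) / ((lam ⟨n - 1, by omega⟩ + μ) / β) := by field_simp
    _ ≤ _ := div_le_kappa_of_mem_spectrum
      (posDef_inv_matSqrt_mul_mul_inv_matSqrt hPpd (posDef_mul_diagonal_mul_transpose hV hlam_pos))
      (hmem _ le_rfl) (hmem _ (show l ≤ n - 1 by omega))
end

section
/- Let A be an n×n real symmetric positive semidefinite matrix with eigenvalues λ₁ ≥ ⋯ ≥ λ_n, let μ > 0, and define the effective dimension d_eff(μ) = ∑_{j=1}^{n} λ_j/(λ_j+μ). Fix γ > 0. If an index j with 1 ≤ j ≤ n satisfies j ≥ (1 + γ⁻¹)·d_eff(μ), then λ_j ≤ γμ. -/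
open Matrix MeasureTheory ProbabilityTheory
open scoped Classical

/-! If `λ_j > γμ`, then, since `λ` is decreasing and `t ↦ t/(t+μ)` is increasing, each of the
first `j` terms of `d_eff(μ)` exceeds `γμ/(γμ+μ) = γ/(γ+1)`, while the remaining terms are
nonnegative because `A` is psd. Hence `d_eff(μ) > jγ/(γ+1)`, i.e. `(1 + γ⁻¹)·d_eff(μ) > j`. -/

noncomputable def effDim {ι : Type*} [Fintype ι] (lam : ι → ℝ) (μ : ℝ) : ℝ :=
  ∑ i, lam i / (lam i + μ)

theorem Matrix.PosSemidef.nonneg_of_eq_mul_diagonal_mul_transpose {m ι : Type*} [Fintype m]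
    [Fintype ι] [DecidableEq ι] {A : Matrix m m ℝ} (hA : A.PosSemidef) {V : Matrix m ι ℝ}
    {lam : ι → ℝ} (hV : Vᵀ * V = 1) (hdecomp : A = V * diagonal lam * Vᵀ) : 0 ≤ lam := by
  have hdiag : Vᵀ * A * V = diagonal lam := by
    rw [hdecomp, Matrix.mul_assoc, Matrix.mul_assoc, hV, Matrix.mul_one, ← Matrix.mul_assoc, hV,
      Matrix.one_mul]
  have hpsd : (diagonal lam).PosSemidef := hdiag ▸ hA.conjTranspose_mul_mul_same V
  exact posSemidef_diagonal_iff.mp hpsd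

theorem div_add_one_lt_div_add {γ μ t : ℝ} (hγ : 0 ≤ γ) (hμ : 0 < μ) (ht : γ * μ < t) :
    γ / (γ + 1) < t / (t + μ) := by
  rw [div_lt_div_iff₀ (by linarith) (by nlinarith)]
  linarith

theorem card_mul_lt_sum_of_nonneg {ι : Type*} [Fintype ι] {s : Finset ι} (hs : s.Nonempty)
    {f : ι → ℝ} (hf : 0 ≤ f) {c : ℝ} (hc : ∀ i ∈ s, c < f i) : s.card * c < ∑ i, f i :=
  calc (s.card : ℝ) * c = ∑ _ ∈ s, c := by rw [Finset.sum_const, nsmul_eq_mul]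
    _ < ∑ i ∈ s, f i := Finset.sum_lt_sum_of_nonempty hs hc
    _ ≤ ∑ i, f i := Finset.sum_le_univ_sum_of_nonneg hf

theorem le_mul_of_one_add_inv_mul_effDim_le {n : ℕ} {lam : Fin n → ℝ} (hlam : 0 ≤ lam)
    (hanti : Antitone lam) {μ γ : ℝ} (hμ : 0 < μ) (hγ : 0 < γ) (b : Fin n)
    (h : (1 + γ⁻¹) * effDim lam μ ≤ b + 1) : lam b ≤ γ * μ := by
  by_contra! hlt
  have hterm : ∀ i ∈ Finset.Iic b, γ / (γ + 1) < lam i / (lam i + μ) := fun i hi =>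
    div_add_one_lt_div_add hγ.le hμ (hlt.trans_le (hanti (Finset.mem_Iic.mp hi)))
  have hnonneg : 0 ≤ fun i => lam i / (lam i + μ) := fun i =>
    div_nonneg (hlam i) (add_pos_of_nonneg_of_pos (hlam i) hμ).le
  have hlower : ((b : ℝ) + 1) * (γ / (γ + 1)) < effDim lam μ := by
    simpa [effDim, Fin.card_Iic] using
      card_mul_lt_sum_of_nonneg ⟨b, Finset.mem_Iic.mpr le_rfl⟩ hnonneg hterm
  have hupper : (1 + γ⁻¹) * effDim lam μ < (1 + γ⁻¹) * effDim lam μ :=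
    calc (1 + γ⁻¹) * effDim lam μ ≤ (b : ℝ) + 1 := h
      _ = (1 + γ⁻¹) * (((b : ℝ) + 1) * (γ / (γ + 1))) := by field_simp
      _ < (1 + γ⁻¹) * effDim lam μ := mul_lt_mul_of_pos_left hlower (by positivity)
  exact lt_irrefl _ hupper

/-- If `j ≥ (1 + γ⁻¹)·d_eff(μ)` then `λ_j ≤ γμ`
(1-indexed `j`, so `λ_j = lam ⟨j-1, _⟩`). -/
theorem effective_dimension_eigenvalue_bound {n : ℕ}
    (A : Matrix (Fin n) (Fin n) ℝ) (hA : A.PosSemidef)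
    (lam : Fin n → ℝ) (hanti : Antitone lam)
    (V : Matrix (Fin n) (Fin n) ℝ) (hV : Vᵀ * V = 1)
    (hdecomp : A = V * Matrix.diagonal lam * Vᵀ)
    (μ : ℝ) (hμ : 0 < μ) (γ : ℝ) (hγ : 0 < γ)
    (j : ℕ) (hj1 : 1 ≤ j) (hjn : j ≤ n)
    (hj : (1 + γ⁻¹) * ∑ i, lam i / (lam i + μ) ≤ (j : ℝ)) :
    lam ⟨j - 1, by omega⟩ ≤ γ * μ := by
  have hlam := Matrix.PosSemidef.nonneg_of_eq_mul_diagonal_mul_transpose hA hV hdecomp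
  refine le_mul_of_one_add_inv_mul_effDim_le hlam hanti hμ hγ _ ?_
  have hj_cast : ((j - 1 : ℕ) : ℝ) + 1 = j := by rw [Nat.cast_sub hj1]; ring
  simpa [effDim, hj_cast] using hj
end
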